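/- Let λ > 0, σ ∈ ℝ, and τ ≥ 0, and set β = λ. Then (σ²/(2β)) ∫_0^1 F_{0,τ}(e^{2πit}) dt = (σ² e^{−λτ} / (2λ³)) · (1 + λτ). -/

import Mathlib

/-!
On the unit circle, with `β = λ` and `a = λτ`, partial fractions give
`F_{0,τ}(z) = e^{-λτ} / λ² · (h(z) + ¼ (z - ½)⁻¹)` with
`h(z) = ½ + e^{az} / (2 - z) + (e^{az} - 1) / z`, which is holomorphic near the closed unit disc
(the singularity at `0` is removable; it is written with `dslope`). The integral over `t` is the
average over the unit circle, so the mean value property contributes `h(0) = 1 + λτ`, while the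
simple pole at `½` averages to zero: under `z ↦ z⁻¹` it becomes `z / (1 - z / 2)`, which is
holomorphic on the disc and vanishes at `0`.
-/

open Complex

noncomputable section

/-- F_{j,τ}(z) = (z^j/(λ−β−λz)) (e^{−βτ}(1−z)²/(λ−(λ+β)z) − 2β e^{λ(z−1)τ}/(λ(λ+β−λz))). -/
def Ffun (lam beta : ℝ) (j : ℕ) (τ : ℝ) (z : ℂ) : ℂ :=
  (z ^ j / (lam - beta - lam * z)) *
    (Complex.exp (-(beta : ℂ) * τ) * (1 - z) ^ 2 / (lam - (lam + beta) * z) -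
      2 * beta * Complex.exp ((lam : ℂ) * (z - 1) * τ) / (lam * (lam + beta - lam * z)))

open Metric
open Real (circleAverage)

theorem integral_comp_exp_two_pi_I_eq_circleAverage {E : Type*} [NormedAddCommGroup E]
    [NormedSpace ℝ E] (f : ℂ → E) :
    ∫ t in (0 : ℝ)..1, f (cexp (2 * Real.pi * I * t)) = circleAverage f 0 1 := by
  have h := intervalIntegral.integral_comp_mul_left (a := 0) (b := 1)
    (fun θ => f (circleMap 0 1 θ)) (c := 2 * Real.pi) (by positivity)
  rw [mul_zero, mul_one] at h
  rw [Real.circleAverage_def, ← h]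
  congr 1 with t
  simp only [circleMap, ofReal_mul, ofReal_ofNat, ofReal_one, one_mul, zero_add]
  ring_nf

theorem circleAverage_const_mul (a : ℂ) (f : ℂ → ℂ) (c : ℂ) (R : ℝ) :
    circleAverage (fun z => a * f z) c R = a * circleAverage f c R :=
  Real.circleAverage_fun_smul (𝕜 := ℂ)

theorem circleAverage_inv_sub_eq_zero {w : ℂ} (hw : ‖w‖ < 1) :
    circleAverage (fun z => (z - w)⁻¹) 0 1 = 0 := by
  have hne : ∀ z ∈ closedBall (0 : ℂ) 1, 1 - w * z ≠ 0 := by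
    intro z hz h
    have : ‖w * z‖ < 1 := by
      rw [norm_mul]
      exact mul_lt_one_of_nonneg_of_lt_one_left (norm_nonneg w) hw (by simpa using hz)
    rw [← sub_eq_zero.mp h, norm_one] at this
    exact lt_irrefl _ this
  have hdiff : DiffContOnCl ℂ (fun z => z / (1 - w * z)) (ball 0 |1|) := by
    apply DifferentiableOn.diffContOnCl
    rw [abs_one, closure_ball _ one_ne_zero]
    exact differentiableOn_id.div (by fun_prop) hne
  rw [← Real.circleAverage_zero_one_congr_inv]
  calc circleAverage (fun z => (z⁻¹ - w)⁻¹) 0 1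
      = circleAverage (fun z => z / (1 - w * z)) 0 1 := by
        refine Real.circleAverage_congr_sphere fun z hz => ?_
        have hz0 : z ≠ 0 := by rintro rfl; simp at hz
        rw [← inv_div, sub_div, one_div, mul_div_assoc, div_self hz0, mul_one]
    _ = 0 := by rw [hdiff.circleAverage]; simp

theorem circleAverage_add_const_mul_inv_sub {f : ℂ → ℂ} (hf : DiffContOnCl ℂ f (ball 0 |1|))
    {w : ℂ} (hw : ‖w‖ < 1) (c : ℂ) :
    circleAverage (fun z => f z + c * (z - w)⁻¹) 0 1 = f 0 := by
  have hf_int : CircleIntegrable f 0 1 := by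
    refine (hf.continuousOn.mono ?_).circleIntegrable zero_le_one
    rw [abs_one, closure_ball _ one_ne_zero]
    exact sphere_subset_closedBall
  have hpole_int : CircleIntegrable (fun z => c * (z - w)⁻¹) 0 1 := by
    refine (continuousOn_const.mul (ContinuousOn.inv₀ (by fun_prop) fun z hz h => ?_)).circleIntegrable
      zero_le_one
    rw [sub_eq_zero.1 h, mem_sphere_zero_iff_norm] at hz
    exact hw.ne hz
  rw [Real.circleAverage_fun_add hf_int hpole_int, hf.circleAverage, circleAverage_const_mul,
    circleAverage_inv_sub_eq_zero hw, mul_zero, add_zero]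

theorem Ffun_self_eq {lam : ℝ} (hlam : lam ≠ 0) (τ : ℝ) {z : ℂ} (h0 : z ≠ 0) (hhalf : z ≠ 1 / 2)
    (htwo : z ≠ 2) :
    Ffun lam lam 0 τ z = cexp (-lam * τ) / lam ^ 2 *
      (1 / 2 + cexp (lam * τ * z) / (2 - z) + dslope (fun w => cexp (lam * τ * w)) 0 z
        + 4⁻¹ * (z - 1 / 2)⁻¹) := by
  have hl : (lam : ℂ) ≠ 0 := ofReal_ne_zero.2 hlam
  have h2 : 2 - z ≠ 0 := sub_ne_zero.2 (Ne.symm htwo)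
  have h3 : z * 2 - 1 ≠ 0 := by
    intro h; apply hhalf; linear_combination h / 2
  have hexp : cexp (lam * (z - 1) * τ) = cexp (lam * τ * z) * cexp (-lam * τ) := by
    rw [← Complex.exp_add]; ring_nf
  rw [dslope_of_ne _ h0, slope_def_field, Ffun, hexp, mul_zero, Complex.exp_zero, sub_zero,
    show (lam : ℂ) - lam - lam * z = -(lam * z) by ring,
    show (lam : ℂ) - (lam + lam) * z = -(2 * lam * (z - 1 / 2)) by ring,
    show (lam : ℂ) * (lam + lam - lam * z) = lam ^ 2 * (2 - z) by ring]
  field_simp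
  ring

theorem circleAverage_Ffun_self {lam : ℝ} (hlam : lam ≠ 0) (τ : ℝ) :
    circleAverage (Ffun lam lam 0 τ) 0 1 = cexp (-lam * τ) / lam ^ 2 * (1 + lam * τ) := by
  set a : ℂ := lam * τ
  set h : ℂ → ℂ := fun z => 1 / 2 + cexp (a * z) / (2 - z) + dslope (fun w => cexp (a * w)) 0 z
  have h_diff : DifferentiableOn ℂ h (ball 0 2) := by
    have hpole : ∀ z ∈ ball (0 : ℂ) 2, 2 - z ≠ 0 := fun z hz hz2 => by
      rw [← sub_eq_zero.1 hz2, mem_ball_zero_iff] at hz; norm_num at hz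
    exact ((differentiableOn_const _).add ((by fun_prop : DifferentiableOn ℂ _ _).div
      (by fun_prop) hpole)).add ((differentiableOn_dslope (ball_mem_nhds 0 two_pos)).2 (by fun_prop))
  have h_diffContOnCl : DiffContOnCl ℂ h (ball 0 |1|) := by
    refine DifferentiableOn.diffContOnCl (h_diff.mono ?_)
    rw [abs_one, closure_ball _ one_ne_zero]
    exact closedBall_subset_ball one_lt_two
  have h_deriv : deriv (fun w => cexp (a * w)) 0 = a := by
    simpa using ((hasDerivAt_id (0 : ℂ)).const_mul a).cexp.deriv
  have hF : Set.EqOn (Ffun lam lam 0 τ)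
      (fun z => cexp (-lam * τ) / lam ^ 2 * (h z + 4⁻¹ * (z - 1 / 2)⁻¹)) (sphere 0 |1|) := by
    intro z hz
    rw [abs_one, mem_sphere_zero_iff_norm] at hz
    exact Ffun_self_eq hlam τ (by rintro rfl; simp at hz) (by rintro rfl; norm_num at hz)
      (by rintro rfl; norm_num at hz)
  rw [Real.circleAverage_congr_sphere hF, circleAverage_const_mul,
    circleAverage_add_const_mul_inv_sub h_diffContOnCl (by norm_num)]
  simp only [h, dslope_same, h_deriv, mul_zero, Complex.exp_zero]
  ring

theorem stmt16_general (lam σ : ℝ) (hlam : 0 < lam) (τ : ℝ) :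
    ((σ : ℂ) ^ 2 / (2 * lam)) *
        ∫ t in (0 : ℝ)..1, Ffun lam lam 0 τ (Complex.exp (2 * Real.pi * Complex.I * t)) =
      ((σ ^ 2 * Real.exp (-lam * τ) / (2 * lam ^ 3) * (1 + lam * τ) : ℝ) : ℂ) := by
  rw [integral_comp_exp_two_pi_I_eq_circleAverage (Ffun lam lam 0 τ),
    circleAverage_Ffun_self hlam.ne']
  have hl : (lam : ℂ) ≠ 0 := ofReal_ne_zero.2 hlam.ne'
  push_cast [ofReal_exp]
  field_simp

/-- with β = λ, (σ²/(2β)) ∫₀¹ F_{0,τ}(e^{2πit}) dt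
= (σ² e^{−λτ}/(2λ³))(1 + λτ). -/
theorem stmt16 (lam σ : ℝ) (hlam : 0 < lam) (τ : ℝ) (hτ : 0 ≤ τ) :
    ((σ : ℂ) ^ 2 / (2 * lam)) *
        ∫ t in (0 : ℝ)..1, Ffun lam lam 0 τ (Complex.exp (2 * Real.pi * Complex.I * t)) =
      ((σ ^ 2 * Real.exp (-lam * τ) / (2 * lam ^ 3) * (1 + lam * τ) : ℝ) : ℂ) :=
  stmt16_general lam σ hlam τ
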